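/- Periodic multivariate Jackson approximation via the Jackson kernel: let d, m be positive integers, ℓ > 0, and let f : ℝ^d → ℝ be ℓ-Lipschitz with respect to the Euclidean norm and 2π-periodic in each coordinate. Define the Jackson kernel b(u) = ∏_{i=1}^{d} ( sin(m·u_i/2)/sin(u_i/2) )^4 for u ∈ [-π,π]^d (extended by continuity where sin(u_i/2) = 0), and define f̃(x) = ( ∫_{[-π,π]^d} b(u)·f(x−u) du ) / ( ∫_{[-π,π]^d} b(u) du ). Then sup_{x ∈ ℝ^d} | f̃(x) − f(x) | ≤ 9·ℓ·d/m. -/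

import Mathlib

open MeasureTheory Real

noncomputable section

/-- The multivariate Jackson kernel `b(u) = ∏ i (sin(m·u_i/2)/sin(u_i/2))^4`. -/
def jacksonKernel (d m : ℕ) (u : Fin d → ℝ) : ℝ :=
  ∏ i, (Real.sin ((m : ℝ) * u i / 2) / Real.sin (u i / 2)) ^ 4

/-- The cube `[-π,π]^d`. -/
def piCube (d : ℕ) : Set (Fin d → ℝ) := Set.univ.pi fun _ => Set.Icc (-π) π

namespace JacksonAux

/-- 1-D Jackson kernel. -/
def K (m : ℕ) (t : ℝ) : ℝ := (Real.sin ((m : ℝ) * t / 2) / Real.sin (t / 2)) ^ 4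

lemma K_nonneg (m : ℕ) (t : ℝ) : 0 ≤ K m t := by
  unfold K; positivity

lemma K_even (m : ℕ) (t : ℝ) : K m (-t) = K m t := by
  unfold K
  rw [show (m : ℝ) * (-t) / 2 = -((m : ℝ) * t / 2) by ring,
    show (-t) / 2 = -(t / 2) by ring, Real.sin_neg, Real.sin_neg, neg_div_neg_eq]

lemma abs_sin_nat_mul (n : ℕ) (x : ℝ) : |Real.sin ((n : ℝ) * x)| ≤ n * |Real.sin x| := by
  induction n with
  | zero => simp
  | succ n ih =>
    have h : ((n : ℝ) + 1) * x = (n : ℝ) * x + x := by ring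
    push_cast
    rw [h, Real.sin_add]
    calc |Real.sin ((n:ℝ)*x) * Real.cos x + Real.cos ((n:ℝ)*x) * Real.sin x|
        ≤ |Real.sin ((n:ℝ)*x) * Real.cos x| + |Real.cos ((n:ℝ)*x) * Real.sin x| := abs_add_le _ _
      _ ≤ |Real.sin ((n:ℝ)*x)| * 1 + 1 * |Real.sin x| := by
          rw [abs_mul, abs_mul]
          gcongr <;> exact Real.abs_cos_le_one _
      _ ≤ (n : ℝ) * |Real.sin x| + 1 * |Real.sin x| := by
          rw [mul_one]
          gcongr
      _ = ((n : ℝ) + 1) * |Real.sin x| := by ring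

lemma K_le (m : ℕ) (t : ℝ) : K m t ≤ (m : ℝ) ^ 4 := by
  unfold K
  by_cases h : Real.sin (t / 2) = 0
  · rw [h, div_zero]
    norm_num
  · have h1 : |Real.sin ((m : ℝ) * t / 2)| ≤ (m : ℝ) * |Real.sin (t / 2)| := by
      rw [show (m : ℝ) * t / 2 = (m : ℝ) * (t / 2) by ring]
      exact abs_sin_nat_mul m (t / 2)
    have h2 : |Real.sin ((m : ℝ) * t / 2) / Real.sin (t / 2)| ≤ (m : ℝ) := by
      rw [abs_div, div_le_iff₀ (abs_pos.2 h)]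
      exact h1
    calc (Real.sin ((m : ℝ) * t / 2) / Real.sin (t / 2)) ^ 4
        = |Real.sin ((m : ℝ) * t / 2) / Real.sin (t / 2)| ^ 4 := by
          rw [← abs_pow, abs_of_nonneg (by positivity)]
      _ ≤ (m : ℝ) ^ 4 := by gcongr

lemma K_lower (m : ℕ) (hm : 0 < m) (t : ℝ) (ht0 : 0 < t) (ht : t ≤ π / m) :
    (2 * m / π) ^ 4 ≤ K m t := by
  have hπ : (0 : ℝ) < π := Real.pi_pos
  have hm' : (0 : ℝ) < m := by exact_mod_cast hm
  have htπ : t ≤ π := ht.trans (by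
    rw [div_le_iff₀ hm']
    nlinarith [Nat.one_le_cast (α := ℝ) |>.2 hm])
  have h2 : Real.sin (t / 2) ≤ t / 2 := Real.sin_le (by linarith)
  have hsinpos : 0 < Real.sin (t / 2) :=
    Real.sin_pos_of_pos_of_lt_pi (by linarith) (by linarith)
  have h3 : (m : ℝ) * t / π ≤ Real.sin ((m : ℝ) * t / 2) := by
    have hb : (m : ℝ) * t / 2 ≤ π / 2 := by
      rw [le_div_iff₀ hm'] at ht
      linarith
    have := Real.mul_le_sin (x := (m : ℝ) * t / 2) (by positivity) hb
    calc (m : ℝ) * t / π = 2 / π * ((m : ℝ) * t / 2) := by field_simp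
      _ ≤ Real.sin ((m : ℝ) * t / 2) := this
  have hratio : 2 * (m : ℝ) / π ≤ Real.sin ((m : ℝ) * t / 2) / Real.sin (t / 2) := by
    rw [le_div_iff₀ hsinpos]
    calc 2 * (m : ℝ) / π * Real.sin (t / 2) ≤ 2 * (m : ℝ) / π * (t / 2) := by
          gcongr
      _ = (m : ℝ) * t / π := by ring
      _ ≤ Real.sin ((m : ℝ) * t / 2) := h3
  unfold K
  gcongr

lemma K_upper_tail (m : ℕ) (t : ℝ) (ht0 : 0 < t) (ht : t ≤ π) : K m t ≤ (π / t) ^ 4 := by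
  have hπ : (0 : ℝ) < π := Real.pi_pos
  have hs : t / π ≤ Real.sin (t / 2) := by
    have := Real.mul_le_sin (x := t / 2) (by linarith) (by linarith)
    calc t / π = 2 / π * (t / 2) := by field_simp
      _ ≤ Real.sin (t / 2) := this
  have hsp : 0 < Real.sin (t / 2) := lt_of_lt_of_le (by positivity) hs
  have h1 : |Real.sin ((m : ℝ) * t / 2) / Real.sin (t / 2)| ≤ π / t := by
    rw [abs_div, div_le_iff₀ (abs_pos.2 hsp.ne')]
    rw [abs_of_pos hsp]
    calc |Real.sin ((m : ℝ) * t / 2)| ≤ 1 := Real.abs_sin_le_one _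
      _ = (t / π) * (π / t) := by field_simp
      _ ≤ Real.sin (t / 2) * (π / t) := by gcongr
      _ = π / t * Real.sin (t / 2) := by ring
  calc K m t = |Real.sin ((m : ℝ) * t / 2) / Real.sin (t / 2)| ^ 4 := by
        unfold K; rw [← abs_pow, abs_of_nonneg (by positivity)]
    _ ≤ (π / t) ^ 4 := by gcongr

lemma K_measurable (m : ℕ) : Measurable (K m) := by
  unfold K
  fun_prop


lemma K_intOn (m : ℕ) : IntegrableOn (K m) (Set.Icc (-π) π) := by
  apply Integrable.mono' (g := fun _ => (m : ℝ) ^ 4)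
    (integrableOn_const measure_Icc_lt_top.ne)
    ((K_measurable m).aestronglyMeasurable)
  filter_upwards with t
  rw [Real.norm_eq_abs, abs_of_nonneg (K_nonneg _ _)]
  exact K_le m t

lemma K2_measurable (m : ℕ) : Measurable (fun t => t ^ 2 * K m t) := by
  exact (measurable_id.pow_const 2).mul (K_measurable m)

lemma K2_intOn (m : ℕ) : IntegrableOn (fun t => t ^ 2 * K m t) (Set.Icc (-π) π) := by
  apply Integrable.mono' (g := fun _ => π ^ 2 * (m : ℝ) ^ 4)
    (integrableOn_const measure_Icc_lt_top.ne)
    ((K2_measurable m).aestronglyMeasurable)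
  filter_upwards [ae_restrict_mem measurableSet_Icc] with t ht
  rw [Real.norm_eq_abs, abs_of_nonneg (mul_nonneg (sq_nonneg t) (K_nonneg m t))]
  have h1 : t ^ 2 ≤ π ^ 2 := sq_le_sq' ht.1 ht.2
  have := K_le m t
  have := K_nonneg m t
  nlinarith [sq_nonneg t]

lemma I0_lb (m : ℕ) (hm : 0 < m) :
    32 * (m : ℝ) ^ 3 / π ^ 3 ≤ ∫ t in Set.Icc (-π) π, K m t := by
  have hπ : (0 : ℝ) < π := Real.pi_pos
  have hm' : (0 : ℝ) < m := by exact_mod_cast hm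
  have hm1 : (1 : ℝ) ≤ m := by exact_mod_cast hm
  set c : ℝ := π / m with hc_def
  have hc : 0 < c := by positivity
  have hcπ : c ≤ π := by
    rw [hc_def, div_le_iff₀ hm']; nlinarith
  set A : ℝ := (2 * (m : ℝ) / π) ^ 4 with hA_def
  have hA : 0 ≤ A := by positivity
  have hsub : Set.Ico (-c) 0 ∪ Set.Ioc 0 c ⊆ Set.Icc (-π) π := by
    intro t ht
    rcases ht with h | h
    · exact ⟨by linarith [h.1], by linarith [h.2]⟩
    · exact ⟨by linarith [h.1], by linarith [h.2]⟩
  have hdisj : Disjoint (Set.Ico (-c) 0) (Set.Ioc 0 c) :=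
    Set.disjoint_left.mpr fun t h1 h2 => absurd h2.1 (not_lt.2 h1.2.le)
  have hint1 : IntegrableOn (K m) (Set.Ico (-c) 0) :=
    (K_intOn m).mono_set (fun t ht => hsub (Or.inl ht))
  have hint2 : IntegrableOn (K m) (Set.Ioc 0 c) :=
    (K_intOn m).mono_set (fun t ht => hsub (Or.inr ht))
  have hlow1 : c * A ≤ ∫ t in Set.Ico (-c) 0, K m t := by
    have := setIntegral_mono_on (integrableOn_const (C := A) measure_Ico_lt_top.ne)
      hint1 measurableSet_Ico
      (fun t ht => by
        rw [← K_even]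
        exact K_lower m hm (-t) (by linarith [ht.2]) (by linarith [ht.1]))
    rw [setIntegral_const, Real.volume_real_Ico_of_le (by linarith), smul_eq_mul] at this
    calc c * A = (0 - -c) * A := by ring
      _ ≤ _ := this
  have hlow2 : c * A ≤ ∫ t in Set.Ioc 0 c, K m t := by
    have := setIntegral_mono_on (integrableOn_const measure_Ioc_lt_top.ne)
      hint2 measurableSet_Ioc
      (fun t ht => K_lower m hm t ht.1 ht.2)
    rw [setIntegral_const, Real.volume_real_Ioc_of_le (by linarith), smul_eq_mul] at this
    calc c * A = (c - 0) * A := by ring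
      _ ≤ _ := this
  have hunion : ∫ t in (Set.Ico (-c) 0 ∪ Set.Ioc 0 c), K m t
      = (∫ t in Set.Ico (-c) 0, K m t) + ∫ t in Set.Ioc 0 c, K m t :=
    setIntegral_union hdisj measurableSet_Ioc hint1 hint2
  have hmono : ∫ t in (Set.Ico (-c) 0 ∪ Set.Ioc 0 c), K m t ≤ ∫ t in Set.Icc (-π) π, K m t := by
    apply setIntegral_mono_set (K_intOn m)
      (Filter.Eventually.of_forall fun t => K_nonneg m t)
    exact HasSubset.Subset.eventuallyLE hsub
  have hfinal : 2 * c * A ≤ ∫ t in Set.Icc (-π) π, K m t := by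
    rw [hunion] at hmono
    linarith
  calc 32 * (m : ℝ) ^ 3 / π ^ 3 = 2 * c * A := by
        rw [hc_def, hA_def]; field_simp; ring
    _ ≤ _ := hfinal

lemma I2_ub (m : ℕ) (hm : 0 < m) :
    ∫ t in Set.Icc (-π) π, t ^ 2 * K m t ≤ 8 * π ^ 3 * m / 3 := by
  have hπ : (0 : ℝ) < π := Real.pi_pos
  have hm' : (0 : ℝ) < m := by exact_mod_cast hm
  have hm1 : (1 : ℝ) ≤ m := by exact_mod_cast hm
  set c : ℝ := π / m with hc_def
  have hc : 0 < c := by positivity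
  have hcπ : c ≤ π := by rw [hc_def, div_le_iff₀ hm']; nlinarith
  have hii : ∀ a b : ℝ, a ∈ Set.Icc (-π) π → b ∈ Set.Icc (-π) π →
      IntervalIntegrable (fun t => t ^ 2 * K m t) volume a b := by
    intro a b ha hb
    rw [intervalIntegrable_iff]
    refine (K2_intOn m).mono_set ?_
    refine Set.Ioc_subset_Icc_self.trans (Set.Icc_subset_Icc ?_ ?_)
    · exact le_min ha.1 hb.1
    · exact max_le ha.2 hb.2
  have hmem : ∀ y : ℝ, -π ≤ y → y ≤ π → y ∈ Set.Icc (-π) π := fun y h1 h2 => ⟨h1, h2⟩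
  have h1 : ∫ t in Set.Icc (-π) π, t ^ 2 * K m t = ∫ t in (-π)..π, t ^ 2 * K m t := by
    rw [integral_Icc_eq_integral_Ioc, intervalIntegral.integral_of_le (by linarith)]
  have hsplit : (∫ t in (-π)..(-c), t ^ 2 * K m t) + (∫ t in (-c)..c, t ^ 2 * K m t)
      + (∫ t in c..π, t ^ 2 * K m t) = ∫ t in (-π)..π, t ^ 2 * K m t := by
    rw [intervalIntegral.integral_add_adjacent_intervals
      (hii _ _ (hmem _ le_rfl (by linarith)) (hmem _ (by linarith) (by linarith)))
      (hii _ _ (hmem _ (by linarith) (by linarith)) (hmem _ (by linarith) (by linarith))),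
      intervalIntegral.integral_add_adjacent_intervals
      (hii _ _ (hmem _ le_rfl (by linarith)) (hmem _ (by linarith) (by linarith)))
      (hii _ _ (hmem _ (by linarith) (by linarith)) (hmem _ (by linarith) le_rfl))]
  have hmid : ∫ t in (-c)..c, t ^ 2 * K m t ≤ 2 * (m : ℝ) ^ 4 * c ^ 3 / 3 := by
    have hb : ∫ t in (-c)..c, (m : ℝ) ^ 4 * t ^ 2 = 2 * (m : ℝ) ^ 4 * c ^ 3 / 3 := by
      rw [intervalIntegral.integral_const_mul, integral_pow]
      ring
    rw [← hb]
    apply intervalIntegral.integral_mono_on (by linarith)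
      (hii _ _ (hmem _ (by linarith) (by linarith)) (hmem _ (by linarith) (by linarith)))
      (((continuous_const.mul (continuous_pow 2)).intervalIntegrable _ _))
    intro t _
    have := K_le m t
    show t ^ 2 * K m t ≤ (m : ℝ) ^ 4 * t ^ 2
    nlinarith [sq_nonneg t, K_nonneg m t]
  have htail : ∫ t in c..π, t ^ 2 * K m t ≤ π ^ 4 * (c⁻¹ - π⁻¹) := by
    have hzero : (0 : ℝ) ∉ Set.uIcc c π := by
      rw [Set.mem_uIcc]; push_neg
      constructor
      · intro h; linarith
      · intro h; linarith
    have hb : ∫ t in c..π, π ^ 4 * t ^ (-2 : ℤ) = π ^ 4 * (c⁻¹ - π⁻¹) := by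
      rw [intervalIntegral.integral_const_mul, integral_zpow (Or.inr ⟨by norm_num, hzero⟩)]
      norm_num
      ring
    rw [← hb]
    apply intervalIntegral.integral_mono_on hcπ
      (hii _ _ (hmem _ (by linarith) (by linarith)) (hmem _ (by linarith) le_rfl))
      ((intervalIntegral.intervalIntegrable_zpow (Or.inr hzero)).const_mul _)
    intro t ht
    have ht0 : 0 < t := lt_of_lt_of_le hc ht.1
    have := K_upper_tail m t ht0 ht.2
    have h2 : t ^ 2 * K m t ≤ t ^ 2 * (π / t) ^ 4 := by nlinarith [sq_nonneg t]
    calc t ^ 2 * K m t ≤ t ^ 2 * (π / t) ^ 4 := h2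
      _ = π ^ 4 * t ^ (-2 : ℤ) := by
          rw [zpow_neg]
          rw [show ((2:ℤ) : ℤ) = ((2:ℕ) : ℤ) by norm_num, zpow_natCast]
          field_simp
  have hleft : ∫ t in (-π)..(-c), t ^ 2 * K m t = ∫ t in c..π, t ^ 2 * K m t := by
    have := intervalIntegral.integral_comp_neg (a := c) (b := π) (fun t => t ^ 2 * K m t)
    beta_reduce at this
    rw [← this]
    congr 1
    funext t
    rw [neg_pow, K_even]
    ring
  rw [h1, ← hsplit, hleft]
  have harith : 2 * (m : ℝ) ^ 4 * c ^ 3 / 3 + 2 * (π ^ 4 * (c⁻¹ - π⁻¹)) ≤ 8 * π ^ 3 * m / 3 := by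
    rw [hc_def]
    rw [show (π / (m : ℝ))⁻¹ = m / π by rw [inv_div]]
    have e1 : 2 * (m : ℝ) ^ 4 * (π / m) ^ 3 / 3 = 2 * π ^ 3 * m / 3 := by
      field_simp
    have e2 : π ^ 4 * ((m : ℝ) / π - π⁻¹) = π ^ 3 * m - π ^ 3 := by
      field_simp
    rw [e1, e2]
    nlinarith [pow_pos hπ 3]
  linarith [hmid, htail]


lemma fubini_cube (d : ℕ) (g : Fin d → ℝ → ℝ) :
    ∫ u in Set.univ.pi (fun _ : Fin d => Set.Icc (-π) π), ∏ i, g i (u i)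
      = ∏ i, ∫ t in Set.Icc (-π) π, g i t := by
  have hms : MeasurableSet (Set.univ.pi fun _ : Fin d => Set.Icc (-π : ℝ) π) :=
    MeasurableSet.univ_pi fun _ => measurableSet_Icc
  rw [← integral_indicator hms]
  have heq : (Set.univ.pi fun _ : Fin d => Set.Icc (-π : ℝ) π).indicator
        (fun u => ∏ i, g i (u i))
      = fun u => ∏ i, (Set.Icc (-π : ℝ) π).indicator (g i) (u i) := by
    funext u
    by_cases h : u ∈ Set.univ.pi fun _ : Fin d => Set.Icc (-π : ℝ) π
    · rw [Set.indicator_of_mem h]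
      exact Finset.prod_congr rfl fun i _ =>
        (Set.indicator_of_mem (h i (Set.mem_univ i)) _).symm
    · rw [Set.indicator_of_notMem h]
      rw [Set.mem_pi] at h; push_neg at h
      obtain ⟨j, _, hj⟩ := h
      exact (Finset.prod_eq_zero (Finset.mem_univ j) (Set.indicator_of_notMem hj _)).symm
  rw [heq, MeasureTheory.integral_fintype_prod_volume_eq_prod (ι := Fin d)
    (f := fun i => (Set.Icc (-π : ℝ) π).indicator (g i))]
  exact Finset.prod_congr rfl fun i _ => integral_indicator measurableSet_Icc


lemma jk_eq (d m : ℕ) (u : Fin d → ℝ) : jacksonKernel d m u = ∏ i, K m (u i) := rfl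

lemma jk_nonneg (d m : ℕ) (u : Fin d → ℝ) : 0 ≤ jacksonKernel d m u := by
  rw [jk_eq]; exact Finset.prod_nonneg fun i _ => K_nonneg m (u i)

lemma jk_le (d m : ℕ) (u : Fin d → ℝ) : jacksonKernel d m u ≤ ((m : ℝ) ^ 4) ^ d := by
  rw [jk_eq]
  calc ∏ i, K m (u i) ≤ ∏ _i : Fin d, (m : ℝ) ^ 4 :=
        Finset.prod_le_prod (fun i _ => K_nonneg m (u i)) (fun i _ => K_le m (u i))
    _ = ((m : ℝ) ^ 4) ^ d := by rw [Finset.prod_const, Finset.card_univ, Fintype.card_fin]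

lemma jk_measurable (d m : ℕ) : Measurable (jacksonKernel d m) := by
  have : jacksonKernel d m = fun u => ∏ i, K m (u i) := rfl
  rw [this]
  exact Finset.measurable_prod Finset.univ fun i _ =>
    (K_measurable m).comp (measurable_pi_apply i)

lemma piCube_meas (d : ℕ) : MeasurableSet (piCube d) :=
  MeasurableSet.univ_pi fun _ => measurableSet_Icc

lemma piCube_fin (d : ℕ) : volume (piCube d) < ⊤ := by
  rw [piCube, volume_pi, Measure.pi_pi]
  exact ENNReal.prod_lt_top fun i _ => measure_Icc_lt_top

lemma B_eq (d m : ℕ) :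
    ∫ u in piCube d, jacksonKernel d m u = (∫ t in Set.Icc (-π) π, K m t) ^ d := by
  have h := fubini_cube d (fun _ => K m)
  simp only [← jk_eq] at h
  rw [piCube, h, Finset.prod_const, Finset.card_univ, Fintype.card_fin]

lemma Bj_eq (d m : ℕ) (j : Fin d) :
    ∫ u in piCube d, (u j) ^ 2 * jacksonKernel d m u
      = (∫ t in Set.Icc (-π) π, t ^ 2 * K m t) * (∫ t in Set.Icc (-π) π, K m t) ^ (d - 1) := by
  have h := fubini_cube d (fun i => if i = j then (fun t => t ^ 2 * K m t) else K m)
  have hfun : ∀ (i : Fin d) (t : ℝ), (if i = j then (fun t => t ^ 2 * K m t) else K m) t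
      = (if i = j then t ^ 2 else 1) * K m t := by
    intro i t; by_cases hij : i = j <;> simp [hij]
  have hpt : ∀ u : Fin d → ℝ, (u j) ^ 2 * jacksonKernel d m u
      = ∏ i, (if i = j then (fun t => t ^ 2 * K m t) else K m) (u i) := by
    intro u
    simp_rw [hfun]
    rw [Finset.prod_mul_distrib, Finset.prod_ite_eq' Finset.univ j (fun i => (u i) ^ 2),
      if_pos (Finset.mem_univ j), jk_eq]
  have hint : ∀ i : Fin d, (∫ t in Set.Icc (-π) π,
        (if i = j then (fun t => t ^ 2 * K m t) else K m) t)
      = if i = j then (∫ t in Set.Icc (-π) π, t ^ 2 * K m t)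
        else ∫ t in Set.Icc (-π) π, K m t := by
    intro i; by_cases hij : i = j <;> simp [hij]
  calc ∫ u in piCube d, (u j) ^ 2 * jacksonKernel d m u
      = ∫ u in piCube d, ∏ i, (if i = j then (fun t => t ^ 2 * K m t) else K m) (u i) := by
        simp_rw [hpt]
    _ = ∏ i, ∫ t in Set.Icc (-π) π, (if i = j then (fun t => t ^ 2 * K m t) else K m) t := h
    _ = (∫ t in Set.Icc (-π) π, t ^ 2 * K m t) * (∫ t in Set.Icc (-π) π, K m t) ^ (d - 1) := by
        rw [Finset.prod_congr rfl (fun i _ => hint i),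
          ← Finset.mul_prod_erase Finset.univ _ (Finset.mem_univ j), if_pos rfl,
          Finset.prod_congr rfl (fun i hi => if_neg (Finset.ne_of_mem_erase hi)),
          Finset.prod_const, Finset.card_erase_of_mem (Finset.mem_univ j),
          Finset.card_univ, Fintype.card_fin]


lemma final_arith (d m : ℕ) (hd : 0 < d) (hm : 0 < m) (ℓ : ℝ) (hℓ : 0 < ℓ)
    (I0 I2 : ℝ) (hI0 : 32 * (m : ℝ) ^ 3 / π ^ 3 ≤ I0) (hI2 : 0 ≤ I2)
    (hI2' : I2 ≤ 8 * π ^ 3 * m / 3) :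
    ℓ * d * I2 / (2 * (9 * Real.sqrt d / m) * I0) + ℓ * (9 * Real.sqrt d / m) / 2
      ≤ 9 * ℓ * d / m := by
  have hπ : (0 : ℝ) < π := Real.pi_pos
  have hm' : (0 : ℝ) < m := by exact_mod_cast hm
  have hd' : (0 : ℝ) < d := by exact_mod_cast hd
  have hd1 : (1 : ℝ) ≤ d := by exact_mod_cast hd
  set s := Real.sqrt d with hs_def
  have hs0 : 0 < s := Real.sqrt_pos.2 hd'
  have hs2 : s ^ 2 = d := Real.sq_sqrt hd'.le
  have hs1 : 1 ≤ s := by nlinarith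
  have hI0pos : 0 < I0 := lt_of_lt_of_le (by positivity) hI0
  have hπ6 : π ^ 6 ≤ 972 := by
    have h2 : π ^ 2 ≤ 9.8697 := by nlinarith [Real.pi_lt_d6, Real.pi_gt_d6]
    calc π ^ 6 = (π ^ 2) ^ 3 := by ring
      _ ≤ (9.8697 : ℝ) ^ 3 := by gcongr
      _ ≤ 972 := by norm_num
  have key : 12 * (m : ℝ) ^ 2 * I2 ≤ π ^ 6 * I0 := by
    have k1 : 12 * (m : ℝ) ^ 2 * I2 ≤ 32 * π ^ 3 * m ^ 3 := by nlinarith [pow_pos hm' 2]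
    have k2 : 32 * π ^ 3 * (m : ℝ) ^ 3 ≤ π ^ 6 * I0 := by
      have h := mul_le_mul_of_nonneg_left hI0 (le_of_lt (pow_pos hπ 6))
      calc 32 * π ^ 3 * (m : ℝ) ^ 3 = π ^ 6 * (32 * m ^ 3 / π ^ 3) := by field_simp
        _ ≤ π ^ 6 * I0 := h
    linarith
  have ht1 : ℓ * d * I2 / (2 * (9 * s / m) * I0) ≤ ℓ * s * π ^ 6 / (216 * m) := by
    rw [div_le_div_iff₀ (by positivity) (by positivity), ← hs2]
    have e : ℓ * s * π ^ 6 * (2 * (9 * s / (m : ℝ)) * I0)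
        = (18 * ℓ * s ^ 2 / m) * (π ^ 6 * I0) := by field_simp; ring
    have e3 : (18 * ℓ * s ^ 2 / (m : ℝ)) * (12 * (m : ℝ) ^ 2 * I2)
        = ℓ * s ^ 2 * I2 * (216 * m) := by field_simp; ring
    rw [e, ← e3]
    exact mul_le_mul_of_nonneg_left key (by positivity)
  have ht2 : ℓ * (9 * s / m) / 2 = 9 * ℓ * s / (2 * m) := by ring
  have hdiff : 9 * ℓ * (d : ℝ) / m - (ℓ * s * π ^ 6 / (216 * m) + 9 * ℓ * s / (2 * m))
      = ℓ * (9 * s ^ 2 - s * π ^ 6 / 216 - 9 * s / 2) / m := by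
    rw [← hs2]; field_simp; ring
  have hpos : 0 ≤ 9 * s ^ 2 - s * π ^ 6 / 216 - 9 * s / 2 := by nlinarith
  have hfin : ℓ * s * π ^ 6 / (216 * m) + 9 * ℓ * s / (2 * m) ≤ 9 * ℓ * d / m := by
    have : 0 ≤ ℓ * (9 * s ^ 2 - s * π ^ 6 / 216 - 9 * s / 2) / m := by positivity
    linarith [hdiff ▸ this]
  rw [ht2]
  linarith [ht1, hfin]


lemma mem_piCube {d : ℕ} {u : Fin d → ℝ} (hu : u ∈ piCube d) (i : Fin d) :
    u i ∈ Set.Icc (-π) π := hu i (Set.mem_univ i)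

end JacksonAux

theorem periodic_multivariate_jackson
    (d m : ℕ) (hd : 0 < d) (hm : 0 < m) (ℓ : ℝ) (hℓ : 0 < ℓ)
    (f : (Fin d → ℝ) → ℝ)
    (hlip : ∀ x y, |f x - f y| ≤ ℓ * Real.sqrt (∑ i, (x i - y i) ^ 2))
    (hper : ∀ (x : Fin d → ℝ) (K : Fin d → ℤ),
      f (fun i => x i + 2 * π * (K i : ℝ)) = f x)
    (ftilde : (Fin d → ℝ) → ℝ)
    (hft : ∀ x, ftilde x =
      (∫ u in piCube d, jacksonKernel d m u * f (x - u)) /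
        ∫ u in piCube d, jacksonKernel d m u) :
    ∀ x, |ftilde x - f x| ≤ 9 * ℓ * d / m := by
  intro x
  have hπ : (0 : ℝ) < π := Real.pi_pos
  have hm' : (0 : ℝ) < m := by exact_mod_cast hm
  have hd' : (0 : ℝ) < d := by exact_mod_cast hd
  set b := jacksonKernel d m with hb_def
  set I0 := ∫ t in Set.Icc (-π) π, JacksonAux.K m t with hI0_def
  set I2 := ∫ t in Set.Icc (-π) π, t ^ 2 * JacksonAux.K m t with hI2_def
  have hI0lb : 32 * (m : ℝ) ^ 3 / π ^ 3 ≤ I0 := JacksonAux.I0_lb m hm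
  have hI2ub : I2 ≤ 8 * π ^ 3 * m / 3 := JacksonAux.I2_ub m hm
  have hI0pos : 0 < I0 := lt_of_lt_of_le (by positivity) hI0lb
  have hI2nn : 0 ≤ I2 := setIntegral_nonneg measurableSet_Icc
    (fun t _ => mul_nonneg (sq_nonneg t) (JacksonAux.K_nonneg m t))
  have hB : (∫ u in piCube d, b u) = I0 ^ d := JacksonAux.B_eq d m
  have hBpos : (0 : ℝ) < ∫ u in piCube d, b u := by rw [hB]; positivity
  have hsd : (0 : ℝ) < Real.sqrt d := Real.sqrt_pos.2 hd'
  -- continuity of f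
  have hcont : Continuous f := by
    have hL : LipschitzWith (Real.toNNReal (ℓ * Real.sqrt d)) f := by
      apply LipschitzWith.of_dist_le_mul
      intro p q
      rw [Real.dist_eq, Real.coe_toNNReal _ (by positivity)]
      refine (hlip p q).trans ?_
      have h1 : ∀ i, (p i - q i) ^ 2 ≤ dist p q ^ 2 := by
        intro i
        have h := dist_le_pi_dist p q i
        rw [Real.dist_eq] at h
        nlinarith [abs_nonneg (p i - q i), sq_abs (p i - q i), dist_nonneg (x := p) (y := q)]
      have h2 : ∑ i, (p i - q i) ^ 2 ≤ (d : ℝ) * dist p q ^ 2 := by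
        calc ∑ i, (p i - q i) ^ 2 ≤ ∑ _i : Fin d, dist p q ^ 2 :=
              Finset.sum_le_sum fun i _ => h1 i
          _ = (d : ℝ) * dist p q ^ 2 := by
              rw [Finset.sum_const, Finset.card_univ, Fintype.card_fin, nsmul_eq_mul]
      calc ℓ * Real.sqrt (∑ i, (p i - q i) ^ 2)
          ≤ ℓ * Real.sqrt ((d : ℝ) * dist p q ^ 2) :=
            mul_le_mul_of_nonneg_left (Real.sqrt_le_sqrt h2) hℓ.le
        _ = ℓ * Real.sqrt d * dist p q := by
            rw [Real.sqrt_mul (by positivity), Real.sqrt_sq dist_nonneg, mul_assoc]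
    exact hL.continuous
  have hSmeas : MeasurableSet (piCube d) := JacksonAux.piCube_meas d
  have hSfin : volume (piCube d) < ⊤ := JacksonAux.piCube_fin d
  have hbmeas : Measurable b := JacksonAux.jk_measurable d m
  have hb_int : IntegrableOn b (piCube d) := by
    apply Integrable.mono' (g := fun _ => ((m : ℝ) ^ 4) ^ d)
      (integrableOn_const hSfin.ne) hbmeas.aestronglyMeasurable
    filter_upwards with u
    rw [Real.norm_eq_abs, abs_of_nonneg (JacksonAux.jk_nonneg d m u)]
    exact JacksonAux.jk_le d m u
  set C : ℝ := |f x| + ℓ * (Real.sqrt d * π) with hC_def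
  have hCnn : 0 ≤ C := by rw [hC_def]; positivity
  have hsum_eq : ∀ u : Fin d → ℝ, ∑ i, ((x - u) i - x i) ^ 2 = ∑ i, (u i) ^ 2 := by
    intro u
    refine Finset.sum_congr rfl fun i _ => ?_
    simp only [Pi.sub_apply]
    ring
  have hfb : ∀ u ∈ piCube d, |f (x - u)| ≤ C := by
    intro u hu
    have h1 : |f (x - u) - f x| ≤ ℓ * Real.sqrt (∑ i, (u i) ^ 2) := by
      have := hlip (x - u) x
      rwa [hsum_eq u] at this
    have h3 : ∑ i, (u i) ^ 2 ≤ (d : ℝ) * π ^ 2 := by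
      calc ∑ i, (u i) ^ 2 ≤ ∑ _i : Fin d, π ^ 2 := by
            refine Finset.sum_le_sum fun i _ => ?_
            have hi := JacksonAux.mem_piCube hu i
            exact sq_le_sq' hi.1 hi.2
        _ = (d : ℝ) * π ^ 2 := by
            rw [Finset.sum_const, Finset.card_univ, Fintype.card_fin, nsmul_eq_mul]
    have h4 : Real.sqrt (∑ i, (u i) ^ 2) ≤ Real.sqrt d * π := by
      refine (Real.sqrt_le_sqrt h3).trans ?_
      rw [Real.sqrt_mul (by positivity), Real.sqrt_sq hπ.le]
    calc |f (x - u)| = |(f (x - u) - f x) + f x| := by ring_nf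
      _ ≤ |f (x - u) - f x| + |f x| := abs_add_le _ _
      _ ≤ ℓ * (Real.sqrt d * π) + |f x| := by
          have := h1.trans (by gcongr : ℓ * Real.sqrt (∑ i, (u i) ^ 2) ≤ ℓ * (Real.sqrt d * π))
          linarith
      _ = C := by rw [hC_def]; ring
  have hbf_meas : Measurable fun u => b u * f (x - u) :=
    hbmeas.mul ((hcont.comp (continuous_const.sub continuous_id)).measurable)
  have hbf_int : IntegrableOn (fun u => b u * f (x - u)) (piCube d) := by
    apply Integrable.mono' (g := fun _ => ((m : ℝ) ^ 4) ^ d * C)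
      (integrableOn_const hSfin.ne) hbf_meas.aestronglyMeasurable
    filter_upwards [ae_restrict_mem hSmeas] with u hu
    rw [Real.norm_eq_abs, abs_mul, abs_of_nonneg (JacksonAux.jk_nonneg d m u)]
    exact mul_le_mul (JacksonAux.jk_le d m u) (hfb u hu) (abs_nonneg _) (by positivity)
  set a : ℝ := 9 * Real.sqrt d / m with ha_def
  have ha : 0 < a := by rw [ha_def]; positivity
  set g : (Fin d → ℝ) → ℝ := fun u => b u * (ℓ * ((∑ i, (u i) ^ 2) / (2 * a) + a / 2))
    with hg_def
  have hsum_cont : Continuous fun u : Fin d → ℝ => ∑ i, (u i) ^ 2 := by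
    apply continuous_finset_sum
    intro i _
    exact (continuous_apply i).pow 2
  have hg_meas : Measurable g :=
    hbmeas.mul (measurable_const.mul ((((hsum_cont.measurable).div_const _).add_const _)))
  have hg_int : IntegrableOn g (piCube d) := by
    apply Integrable.mono'
      (g := fun _ => ((m : ℝ) ^ 4) ^ d * (ℓ * ((d : ℝ) * π ^ 2 / (2 * a) + a / 2)))
      (integrableOn_const hSfin.ne) hg_meas.aestronglyMeasurable
    filter_upwards [ae_restrict_mem hSmeas] with u hu
    have h3 : ∑ i, (u i) ^ 2 ≤ (d : ℝ) * π ^ 2 := by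
      calc ∑ i, (u i) ^ 2 ≤ ∑ _i : Fin d, π ^ 2 := by
            refine Finset.sum_le_sum fun i _ => ?_
            have hi := JacksonAux.mem_piCube hu i
            exact sq_le_sq' hi.1 hi.2
        _ = (d : ℝ) * π ^ 2 := by
            rw [Finset.sum_const, Finset.card_univ, Fintype.card_fin, nsmul_eq_mul]
    have hsnn : 0 ≤ ∑ i, (u i) ^ 2 := Finset.sum_nonneg fun i _ => sq_nonneg _
    rw [Real.norm_eq_abs, hg_def, abs_mul, abs_of_nonneg (JacksonAux.jk_nonneg d m u)]
    have hinner : |ℓ * ((∑ i, (u i) ^ 2) / (2 * a) + a / 2)|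
        ≤ ℓ * ((d : ℝ) * π ^ 2 / (2 * a) + a / 2) := by
      rw [abs_of_nonneg (by positivity)]
      gcongr
    exact mul_le_mul (JacksonAux.jk_le d m u) hinner (abs_nonneg _) (by positivity)
  have hu2_int : ∀ j : Fin d, IntegrableOn (fun u => (u j) ^ 2 * b u) (piCube d) := by
    intro j
    apply Integrable.mono' (g := fun _ => π ^ 2 * ((m : ℝ) ^ 4) ^ d)
      (integrableOn_const hSfin.ne)
      ((((continuous_apply j).pow 2).measurable.mul hbmeas).aestronglyMeasurable)
    filter_upwards [ae_restrict_mem hSmeas] with u hu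
    simp only [Pi.mul_apply, Pi.pow_apply]
    rw [Real.norm_eq_abs,
      abs_of_nonneg (mul_nonneg (sq_nonneg _) (JacksonAux.jk_nonneg d m u))]
    have hi := JacksonAux.mem_piCube hu j
    exact mul_le_mul (sq_le_sq' hi.1 hi.2) (JacksonAux.jk_le d m u)
      (JacksonAux.jk_nonneg d m u) (by positivity)
  -- pointwise bound
  have hpt : ∀ u, |b u * (f (x - u) - f x)| ≤ g u := by
    intro u
    rw [abs_mul, abs_of_nonneg (JacksonAux.jk_nonneg d m u), hg_def]
    refine mul_le_mul_of_nonneg_left ?_ (JacksonAux.jk_nonneg d m u)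
    have h1 : |f (x - u) - f x| ≤ ℓ * Real.sqrt (∑ i, (u i) ^ 2) := by
      have := hlip (x - u) x
      rwa [hsum_eq u] at this
    refine h1.trans (mul_le_mul_of_nonneg_left ?_ hℓ.le)
    have hsnn : 0 ≤ ∑ i, (u i) ^ 2 := Finset.sum_nonneg fun i _ => sq_nonneg _
    have hsq := Real.sq_sqrt hsnn
    have key : Real.sqrt (∑ i, (u i) ^ 2) * (2 * a) ≤ (∑ i, (u i) ^ 2) + a ^ 2 := by
      nlinarith [sq_nonneg (Real.sqrt (∑ i, (u i) ^ 2) - a)]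
    have e : (∑ i, (u i) ^ 2) / (2 * a) + a / 2 = ((∑ i, (u i) ^ 2) + a ^ 2) / (2 * a) := by
      field_simp
    rw [e, le_div_iff₀ (by positivity)]
    exact key
  have hdiff_int : IntegrableOn (fun u => b u * (f (x - u) - f x)) (piCube d) := by
    have : (fun u => b u * (f (x - u) - f x))
        = fun u => b u * f (x - u) - b u * f x := by funext u; ring
    rw [this]
    exact hbf_int.sub (hb_int.mul_const (f x))
  -- numerator identity
  have hnum : (∫ u in piCube d, b u * f (x - u)) - f x * (∫ u in piCube d, b u)
      = ∫ u in piCube d, b u * (f (x - u) - f x) := by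
    have e : (fun u => b u * (f (x - u) - f x))
        = fun u => b u * f (x - u) - b u * f x := by funext u; ring
    rw [e, integral_sub hbf_int (hb_int.mul_const (f x)),
      MeasureTheory.integral_mul_const (f x) b]
    ring
  -- integral of g
  have hd1 : I0 ^ d = I0 ^ (d - 1) * I0 := by
    rw [← pow_succ]
    congr 1
    omega
  have hg_eq : (∫ u in piCube d, g u)
      = ℓ / (2 * a) * ((d : ℝ) * (I2 * I0 ^ (d - 1))) + ℓ * a / 2 * I0 ^ d := by
    have expand : g = fun u =>
        ℓ / (2 * a) * (∑ i, (u i) ^ 2 * b u) + ℓ * a / 2 * b u := by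
      funext u
      rw [hg_def, ← Finset.sum_mul]
      field_simp
    have int1 : IntegrableOn (fun u => ∑ i, (u i) ^ 2 * b u) (piCube d) :=
      integrable_finset_sum _ fun j _ => hu2_int j
    rw [expand, integral_add (int1.const_mul _) (hb_int.const_mul _),
      MeasureTheory.integral_const_mul, MeasureTheory.integral_const_mul,
      integral_finset_sum _ fun j _ => hu2_int j, hB]
    congr 1
    congr 1
    rw [Finset.sum_congr rfl fun j _ => JacksonAux.Bj_eq d m j, Finset.sum_const,
      Finset.card_univ, Fintype.card_fin, nsmul_eq_mul]
  -- final assembly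
  rw [hft x]
  have heq : (∫ u in piCube d, b u * f (x - u)) / (∫ u in piCube d, b u) - f x
      = ((∫ u in piCube d, b u * f (x - u)) - f x * (∫ u in piCube d, b u))
        / (∫ u in piCube d, b u) := by
    field_simp
  rw [heq, hnum, abs_div, abs_of_pos hBpos]
  have habs : |∫ u in piCube d, b u * (f (x - u) - f x)| ≤ ∫ u in piCube d, g u := by
    have h1 : |∫ u in piCube d, b u * (f (x - u) - f x)|
        ≤ ∫ u in piCube d, |b u * (f (x - u) - f x)| := by
      have h0 := norm_integral_le_integral_norm (μ := volume.restrict (piCube d))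
        (fun u => b u * (f (x - u) - f x))
      simp only [Real.norm_eq_abs] at h0
      exact h0
    exact h1.trans (integral_mono hdiff_int.abs hg_int hpt)
  have hfrac : (∫ u in piCube d, g u) / (∫ u in piCube d, b u) ≤ 9 * ℓ * d / m := by
    rw [hg_eq, hB]
    have hEq : (ℓ / (2 * a) * ((d : ℝ) * (I2 * I0 ^ (d - 1))) + ℓ * a / 2 * I0 ^ d) / I0 ^ d
        = ℓ * d * I2 / (2 * a * I0) + ℓ * a / 2 := by
      rw [hd1]
      have hI0n : I0 ^ (d - 1) ≠ 0 := by positivity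
      field_simp
    rw [hEq, ha_def]
    have := JacksonAux.final_arith d m hd hm ℓ hℓ I0 I2 hI0lb hI2nn hI2ub
    convert this using 2
  calc |∫ u in piCube d, b u * (f (x - u) - f x)| / (∫ u in piCube d, b u)
      ≤ (∫ u in piCube d, g u) / (∫ u in piCube d, b u) := by gcongr
    _ ≤ 9 * ℓ * d / m := hfrac
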